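/- arXiv:2605.14672 — 3 statements merged into one kernel-verified Lean document; each statement's English description precedes it below -/
import Mathlib

section
/- (Lemma 1, gradient part.) Let K be a real symmetric positive semidefinite N×N matrix, λ > 0, y ∈ ℝ^N, A := (K + λI)⁻¹, α := A·y, β := A·α. Fix indices i ≠ j and let E_ij := e_i e_jᵀ + e_j e_iᵀ. Then the map t ↦ λ²·‖(K + t·E_ij + λI)⁻¹ y‖² is differentiable at t = 0 with derivative −2λ²·(β_i·α_j + β_j·α_i). -/
open Matrix

attribute [local instance] Matrix.linftyOpNormedRing Matrix.linftyOpNormedAlgebra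

/-- **Lemma 1 (gradient part).** For PSD `K`, `λ > 0`, `A = (K + λI)⁻¹`,
`α = A·y`, `β = A·α`, and `E_ij = e_i e_jᵀ + e_j e_iᵀ` with `i ≠ j`, the KRR
training loss `t ↦ λ²‖(K + t·E_ij + λI)⁻¹ y‖²` is differentiable at `t = 0`
with derivative `-2λ²(β_i α_j + β_j α_i)`. -/
theorem krr_loss_gradient {N : ℕ}
    (K : Matrix (Fin N) (Fin N) ℝ) (hK : K.PosSemidef)
    (lam : ℝ) (hlam : 0 < lam)
    (y : Fin N → ℝ)
    (A : Matrix (Fin N) (Fin N) ℝ)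
    (hA : A = (K + lam • (1 : Matrix (Fin N) (Fin N) ℝ))⁻¹)
    (α : Fin N → ℝ) (hα : α = A *ᵥ y)
    (β : Fin N → ℝ) (hβ : β = A *ᵥ α)
    (i j : Fin N) (hij : i ≠ j)
    (E : Matrix (Fin N) (Fin N) ℝ)
    (hE : E = Matrix.single i j 1 + Matrix.single j i 1) :
    HasDerivAt
      (fun t : ℝ =>
        lam ^ 2 * ∑ k, (((K + t • E + lam • (1 : Matrix (Fin N) (Fin N) ℝ))⁻¹ *ᵥ y) k) ^ 2)
      (-2 * lam ^ 2 * (β i * α j + β j * α i)) 0 := by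
  have hpd : (K + lam • (1 : Matrix (Fin N) (Fin N) ℝ)).PosDef := by
    refine Matrix.PosDef.posSemidef_add hK ?_
    rw [Matrix.smul_one_eq_diagonal]
    exact Matrix.PosDef.diagonal (fun _ => hlam)
  have hU : IsUnit (K + lam • (1 : Matrix (Fin N) (Fin N) ℝ)) := hpd.isUnit
  have hcoe : (hU.unit : Matrix (Fin N) (Fin N) ℝ) = K + lam • 1 := hU.unit_spec
  have hinv : ((hU.unit⁻¹ : (Matrix (Fin N) (Fin N) ℝ)ˣ) : Matrix (Fin N) (Fin N) ℝ) = A := by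
    have h1 := Ring.inverse_unit hU.unit
    rw [hcoe] at h1
    rw [hA, Matrix.nonsing_inv_eq_ringInverse, ← h1]
  have hg : HasDerivAt (fun t : ℝ => K + t • E + lam • (1 : Matrix (Fin N) (Fin N) ℝ)) E 0 := by
    have h1 : HasDerivAt (fun t : ℝ => t • E) ((1:ℝ) • E) 0 :=
      (hasDerivAt_id (0:ℝ)).smul_const E
    have h2 := ((h1.const_add K).add_const (lam • (1 : Matrix (Fin N) (Fin N) ℝ)))
    rw [one_smul] at h2; exact h2
  have hg0 : K + (0:ℝ) • E + lam • (1 : Matrix (Fin N) (Fin N) ℝ) = K + lam • 1 := by simp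
  have hfd := hasFDerivAt_ringInverse (𝕜 := ℝ) hU.unit
  rw [hcoe, hinv] at hfd
  have hl : HasFDerivAt (Ring.inverse)
      (-ContinuousLinearMap.mulLeftRight ℝ (Matrix (Fin N) (Fin N) ℝ) A A)
      (K + (0:ℝ) • E + lam • (1 : Matrix (Fin N) (Fin N) ℝ)) := by
    rw [hg0]; exact hfd
  have hinvd : HasDerivAt
      (fun t : ℝ => Ring.inverse (K + t • E + lam • (1 : Matrix (Fin N) (Fin N) ℝ)))
      (-(A * E * A)) 0 := by
    have h := hl.comp_hasDerivAt 0 hg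
    exact h
  -- rewrite Ring.inverse as ⁻¹
  have hinvd' : HasDerivAt
      (fun t : ℝ => (K + t • E + lam • (1 : Matrix (Fin N) (Fin N) ℝ))⁻¹)
      (-(A * E * A)) 0 := by
    simpa only [Matrix.nonsing_inv_eq_ringInverse] using hinvd
  -- the continuous linear map X ↦ X *ᵥ y
  let L : Matrix (Fin N) (Fin N) ℝ →ₗ[ℝ] (Fin N → ℝ) :=
    { toFun := fun X => X *ᵥ y
      map_add' := fun X Y => Matrix.add_mulVec X Y y
      map_smul' := fun c X => Matrix.smul_mulVec c X y }
  have hαd : HasDerivAt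
      (fun t : ℝ => (K + t • E + lam • (1 : Matrix (Fin N) (Fin N) ℝ))⁻¹ *ᵥ y)
      (-(A * E * A) *ᵥ y) 0 := by
    have := (L.toContinuousLinearMap.hasFDerivAt (x := (K + (0:ℝ) • E + lam • (1 : Matrix (Fin N) (Fin N) ℝ))⁻¹)).comp_hasDerivAt 0 hinvd'
    exact this
  -- value of the curve at 0
  have hval : (fun t : ℝ => (K + t • E + lam • (1 : Matrix (Fin N) (Fin N) ℝ))⁻¹ *ᵥ y) 0 = α := by
    simp [hα, hA]
  -- componentwise, square, sum
  have hsum : HasDerivAt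
      (fun t : ℝ => ∑ k, (((K + t • E + lam • (1 : Matrix (Fin N) (Fin N) ℝ))⁻¹ *ᵥ y) k) ^ 2)
      (∑ k, 2 * α k * ((-(A * E * A) *ᵥ y) k)) 0 := by
    refine HasDerivAt.fun_sum (fun k _ => ?_)
    have hk : HasDerivAt
        (fun t : ℝ => ((K + t • E + lam • (1 : Matrix (Fin N) (Fin N) ℝ))⁻¹ *ᵥ y) k)
        ((-(A * E * A) *ᵥ y) k) 0 := by
      have := (ContinuousLinearMap.proj (R := ℝ) (φ := fun _ : Fin N => ℝ) k).hasFDerivAt.comp_hasDerivAt 0 hαd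
      exact this
    have h2 := hk.pow 2
    have h0 : ((K + (0:ℝ) • E + lam • (1 : Matrix (Fin N) (Fin N) ℝ))⁻¹ *ᵥ y) k = α k := by
      simp [hα, hA]
    rw [h0] at h2
    refine h2.congr_deriv ?_
    push_cast
    ring
  have final := hsum.const_mul (lam ^ 2)
  refine final.congr_deriv ?_
  -- arithmetic: show derivative values agree
  have hAT : Aᵀ = A := by
    rw [hA, Matrix.transpose_nonsing_inv]
    congr 1
    have h := hpd.isHermitian.eq
    rwa [Matrix.conjTranspose_eq_transpose_of_trivial] at h
  have hval2 : -(A * E * A) *ᵥ y = -(A *ᵥ (E *ᵥ α)) := by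
    simp [hα, Matrix.neg_mulVec, Matrix.mulVec_mulVec, mul_assoc]
  rw [hval2]
  have hdot : ∑ k, 2 * α k * (-(A *ᵥ (E *ᵥ α))) k = -2 * (β ⬝ᵥ (E *ᵥ α)) := by
    have h1 : ∑ k, 2 * α k * (-(A *ᵥ (E *ᵥ α))) k = -2 * (α ⬝ᵥ (A *ᵥ (E *ᵥ α))) := by
      simp [dotProduct, Finset.mul_sum]
      ring_nf
    rw [h1]
    congr 1
    rw [Matrix.dotProduct_mulVec, hβ]
    congr 1
    rw [← Matrix.mulVec_transpose, hAT]
  rw [hdot]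
  have hEα : β ⬝ᵥ (E *ᵥ α) = β i * α j + β j * α i := by
    rw [hE, Matrix.add_mulVec, Matrix.single_mulVec, Matrix.single_mulVec]
    simp only [dotProduct, Function.update_apply, Pi.add_apply, Pi.zero_apply, one_mul,
      mul_add, mul_ite, mul_zero, Finset.sum_add_distrib]
    rw [Finset.sum_ite_eq' Finset.univ i (fun x => β x * α j),
      Finset.sum_ite_eq' Finset.univ j (fun x => β x * α i)]
    simp
  rw [hEα]
  ring
end

section
/- (Lemma 1, remainder bound.) Let K be a real symmetric positive semidefinite N×N matrix, λ > 0, y ∈ ℝ^N, A := (K + λI)⁻¹, α := A·y, β := A·α. For i ≠ j define R_ij := 4λ²·(A_ij·(β_i·α_j + β_j·α_i) + A_ii·β_j·α_j + A_jj·β_i·α_i). Then |R_ij| ≤ 8·‖y‖·λ⁻¹·(|α_i| + |α_j|). -/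
open Matrix

/-- **Lemma 1 (remainder bound).** For PSD `K`, `λ > 0`, `A = (K + λI)⁻¹`,
`α = A·y`, `β = A·α`, and `i ≠ j`, the remainder
`R_ij = 4λ²(A_ij(β_i α_j + β_j α_i) + A_ii β_j α_j + A_jj β_i α_i)` satisfies
`|R_ij| ≤ 8‖y‖λ⁻¹(|α_i| + |α_j|)`. -/
theorem krr_hessian_remainder_bound {N : ℕ}
    (K : Matrix (Fin N) (Fin N) ℝ) (hK : K.PosSemidef)
    (lam : ℝ) (hlam : 0 < lam)
    (y : Fin N → ℝ)
    (A : Matrix (Fin N) (Fin N) ℝ)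
    (hA : A = (K + lam • (1 : Matrix (Fin N) (Fin N) ℝ))⁻¹)
    (α : Fin N → ℝ) (hα : α = A *ᵥ y)
    (β : Fin N → ℝ) (hβ : β = A *ᵥ α)
    (i j : Fin N) (hij : i ≠ j)
    (R : ℝ)
    (hR : R = 4 * lam ^ 2 *
      (A i j * (β i * α j + β j * α i) + A i i * (β j * α j) + A j j * (β i * α i))) :
    |R| ≤ 8 * Real.sqrt (∑ k, (y k) ^ 2) * lam⁻¹ * (|α i| + |α j|) := by
  set M := K + lam • (1 : Matrix (Fin N) (Fin N) ℝ) with hMdef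
  have hone : (lam • (1 : Matrix (Fin N) (Fin N) ℝ)).PosDef := by
    rw [Matrix.smul_one_eq_diagonal]
    exact Matrix.posDef_diagonal_iff.2 fun _ => hlam
  have hMpd : M.PosDef := Matrix.PosDef.posSemidef_add hK hone
  have hMA : M * A = 1 := by
    rw [hA]; exact mul_nonsing_inv _ (isUnit_iff_isUnit_det _ |>.1 hMpd.isUnit)
  -- key norm bound
  have key : ∀ x : Fin N → ℝ,
      Real.sqrt (∑ k, ((A *ᵥ x) k) ^ 2) ≤ lam⁻¹ * Real.sqrt (∑ k, (x k) ^ 2) := by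
    intro x
    set u := A *ᵥ x with hu
    have hMu : M *ᵥ u = x := by
      rw [hu, Matrix.mulVec_mulVec, hMA, Matrix.one_mulVec]
    have hquad : ∑ k, u k * x k = u ⬝ᵥ (K *ᵥ u) + lam * ∑ k, u k ^ 2 := by
      have : ∑ k, u k * x k = u ⬝ᵥ (M *ᵥ u) := by rw [hMu]; rfl
      rw [this, hMdef, Matrix.add_mulVec, dotProduct_add,
        Matrix.smul_mulVec, Matrix.one_mulVec, dotProduct_smul]
      congr 1
      simp [dotProduct, pow_two, smul_eq_mul]
    have hKu : 0 ≤ u ⬝ᵥ (K *ᵥ u) := by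
      have := hK.dotProduct_mulVec_nonneg u
      simpa using this
    have h1 : lam * ∑ k, u k ^ 2 ≤ ∑ k, u k * x k := by linarith
    have hcs : (∑ k, u k * x k) ≤ Real.sqrt (∑ k, u k ^ 2) * Real.sqrt (∑ k, x k ^ 2) := by
      have h2 := Finset.sum_mul_sq_le_sq_mul_sq Finset.univ u x
      calc (∑ k, u k * x k) ≤ |∑ k, u k * x k| := le_abs_self _
        _ = Real.sqrt ((∑ k, u k * x k) ^ 2) := (Real.sqrt_sq_eq_abs _).symm
        _ ≤ Real.sqrt ((∑ k, u k ^ 2) * ∑ k, x k ^ 2) := Real.sqrt_le_sqrt h2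
        _ = _ := Real.sqrt_mul (Finset.sum_nonneg fun _ _ => sq_nonneg _) _
    set a := Real.sqrt (∑ k, u k ^ 2) with ha
    set b := Real.sqrt (∑ k, x k ^ 2) with hb
    have ha0 : 0 ≤ a := Real.sqrt_nonneg _
    have hb0 : 0 ≤ b := Real.sqrt_nonneg _
    have hasq : a ^ 2 = ∑ k, u k ^ 2 :=
      Real.sq_sqrt (Finset.sum_nonneg fun _ _ => sq_nonneg _)
    have hlaab : lam * a ^ 2 ≤ a * b := by
      rw [hasq]; exact le_trans h1 hcs
    rcases eq_or_lt_of_le ha0 with h | h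
    · rw [← h]; positivity
    · have h2 : lam * a ≤ b := by nlinarith
      calc a = lam⁻¹ * (lam * a) := by field_simp
        _ ≤ lam⁻¹ * b := mul_le_mul_of_nonneg_left h2 (by positivity)
  -- entry bound
  have hentry : ∀ k l : Fin N, |A k l| ≤ lam⁻¹ := by
    intro k l
    have h1 : A k l = (A *ᵥ Pi.single l 1) k := by
      simp [Matrix.mulVec_single]
    have h2 : |A k l| ≤ Real.sqrt (∑ m, ((A *ᵥ Pi.single l 1) m) ^ 2) := by
      rw [h1, ← Real.sqrt_sq_eq_abs]
      exact Real.sqrt_le_sqrt (Finset.single_le_sum (f := fun m => ((A *ᵥ Pi.single l 1) m) ^ 2)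
        (fun _ _ => sq_nonneg _) (Finset.mem_univ k))
    have h3 : Real.sqrt (∑ m, (Pi.single (M := fun _ : Fin N => ℝ) l 1 m) ^ 2) = 1 := by
      rw [Finset.sum_eq_single l] <;> simp +contextual [Pi.single_apply]
    calc |A k l| ≤ lam⁻¹ * Real.sqrt (∑ m, (Pi.single (M := fun _ : Fin N => ℝ) l 1 m) ^ 2) :=
          le_trans h2 (key _)
      _ = lam⁻¹ := by rw [h3, mul_one]
  -- β bound
  have hvecbound : ∀ (v : Fin N → ℝ) (k : Fin N), |v k| ≤ Real.sqrt (∑ m, (v m) ^ 2) := by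
    intro v k
    rw [← Real.sqrt_sq_eq_abs]
    exact Real.sqrt_le_sqrt (Finset.single_le_sum (f := fun m => (v m) ^ 2)
      (fun _ _ => sq_nonneg _) (Finset.mem_univ k))
  set Y := Real.sqrt (∑ k, (y k) ^ 2) with hY
  have hY0 : 0 ≤ Y := Real.sqrt_nonneg _
  have hβb : ∀ k, |β k| ≤ lam⁻¹ * (lam⁻¹ * Y) := by
    intro k
    calc |β k| ≤ Real.sqrt (∑ m, (β m) ^ 2) := hvecbound β k
      _ ≤ lam⁻¹ * Real.sqrt (∑ m, (α m) ^ 2) := by rw [hβ]; exact key α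
      _ ≤ lam⁻¹ * (lam⁻¹ * Y) := by
          have := key y
          rw [← hα] at this
          exact mul_le_mul_of_nonneg_left this (by positivity)
  have hc : (0:ℝ) < lam⁻¹ := by positivity
  set c := lam⁻¹ with hcdef
  have hlamc : lam * c = 1 := mul_inv_cancel₀ hlam.ne'
  have hAij := hentry i j
  have hAii := hentry i i
  have hAjj := hentry j j
  have hbi := hβb i
  have hbj := hβb j
  have hai : (0:ℝ) ≤ |α i| := abs_nonneg _
  have haj : (0:ℝ) ≤ |α j| := abs_nonneg _
  have hbound : |R| ≤ 4 * lam ^ 2 *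
      (|A i j| * (|β i| * |α j| + |β j| * |α i|) + |A i i| * (|β j| * |α j|)
        + |A j j| * (|β i| * |α i|)) := by
    rw [hR, abs_mul]
    rw [abs_of_nonneg (by positivity : (0:ℝ) ≤ 4 * lam ^ 2)]
    refine mul_le_mul_of_nonneg_left ?_ (by positivity)
    calc |A i j * (β i * α j + β j * α i) + A i i * (β j * α j) + A j j * (β i * α i)|
        ≤ |A i j * (β i * α j + β j * α i)| + |A i i * (β j * α j)| + |A j j * (β i * α i)| :=
          (abs_add_le _ _).trans (add_le_add_left (abs_add_le _ _) _)
      _ ≤ |A i j| * (|β i| * |α j| + |β j| * |α i|) + |A i i| * (|β j| * |α j|)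
            + |A j j| * (|β i| * |α i|) := by
          have : |β i * α j + β j * α i| ≤ |β i| * |α j| + |β j| * |α i| :=
            (abs_add_le _ _).trans (by rw [abs_mul, abs_mul])
          refine add_le_add (add_le_add ?_ ?_) ?_
          · rw [abs_mul]; exact mul_le_mul_of_nonneg_left this (abs_nonneg _)
          · exact le_of_eq (by rw [abs_mul, abs_mul])
          · exact le_of_eq (by rw [abs_mul, abs_mul])
  refine hbound.trans ?_
  have h2 : 8 * Y * c * (|α i| + |α j|) =
      4 * lam ^ 2 * (c * ((c * (c * Y)) * |α j| + (c * (c * Y)) * |α i|)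
        + c * ((c * (c * Y)) * |α j|) + c * ((c * (c * Y)) * |α i|)) := by
    have h3 : lam ^ 2 * c ^ 2 = 1 := by rw [hcdef]; field_simp
    linear_combination (-(8 * Y * c * (|α i| + |α j|))) * h3
  rw [h2]
  refine mul_le_mul_of_nonneg_left ?_ (by positivity)
  have habsA : (0:ℝ) ≤ |A i j| := abs_nonneg _
  gcongr <;> nlinarith [hbi, hbj, hAij, hAii, hAjj, abs_nonneg (β i), abs_nonneg (β j)]
end

section
/- (Plug-in regret under relative perturbation, Theorem 3 Step 4.) Let ι be a nonempty finite index set, a : ι → ℝ with a_p ≥ 0, Z := Σ_p √(a_p) > 0, and let â : ι → ℝ satisfy â_p = 0 whenever a_p = 0 and |â_p − a_p| ≤ ε·a_p for all p with a_p > 0, where 0 ≤ ε ≤ 1/2. Then (Σ_p √(â_p)) · (Σ_{p : a_p > 0} a_p / √(â_p)) ≤ (1 + ε)² · Z². Consequently, for budget B > 0 the plug-in allocation s_p := (B/Ẑ)·√(â_p) with Ẑ := Σ_p √(â_p) satisfies Σ_{p : a_p > 0} a_p / s_p ≤ (1 + ε)² · Z² / B. -/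
/-!
On the support of `a` the relative error bound sandwiches `(1 - ε) a_p ≤ â_p ≤ (1 + ε) a_p`,
so `Σ √â_p ≤ √(1 + ε) Z` and `Σ a_p / √â_p ≤ Z / √(1 - ε)`. The product is therefore at most
`√((1 + ε) / (1 - ε)) Z²`, and `√((1 + ε) / (1 - ε)) ≤ (1 + ε)²` because
`(1 + ε)³ (1 - ε) ≥ 1` for `0 ≤ ε ≤ 1/2`. The allocation bound is the same product divided by `B`.
-/

open Finset Real

lemma sqrt_le_sqrt_mul_sqrt_of_le_mul {x y c : ℝ} (hc : 0 ≤ c) (h : x ≤ c * y) :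
    √x ≤ √c * √y :=
  (sqrt_le_sqrt h).trans_eq (sqrt_mul hc y)

lemma div_sqrt_le_sqrt_div_sqrt_of_mul_le {x y c : ℝ} (hy : 0 < y) (hc : 0 < c)
    (h : c * y ≤ x) : y / √x ≤ √y / √c :=
  calc y / √x ≤ y / (√c * √y) := by
        gcongr
        rw [← sqrt_mul hc.le]
        exact sqrt_le_sqrt h
    _ = √y / √c := by rw [mul_comm, ← div_div, div_sqrt]

lemma sqrt_one_add_le_sq_mul_sqrt_one_sub {ε : ℝ} (hε0 : 0 ≤ ε) (hε : ε ≤ 1 / 2) :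
    √(1 + ε) ≤ (1 + ε) ^ 2 * √(1 - ε) := by
  have hcubic : 1 ≤ (1 + ε) ^ 3 * (1 - ε) := by nlinarith [sq_nonneg ε, pow_nonneg hε0 3]
  calc √(1 + ε) ≤ √(((1 + ε) ^ 2) ^ 2 * (1 - ε)) := sqrt_le_sqrt (by nlinarith)
    _ = (1 + ε) ^ 2 * √(1 - ε) := by
      rw [sqrt_mul (by positivity), sqrt_sq (by positivity)]

section Finset

variable {ι : Type*} (s : Finset ι) {a b : ι → ℝ} {c ε : ℝ}

lemma sum_sqrt_le_sqrt_mul_sum_sqrt (hc : 0 ≤ c) (h : ∀ p ∈ s, b p ≤ c * a p) :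
    ∑ p ∈ s, √(b p) ≤ √c * ∑ p ∈ s, √(a p) := by
  rw [mul_sum]
  exact sum_le_sum fun p hp => sqrt_le_sqrt_mul_sqrt_of_le_mul hc (h p hp)

lemma sum_div_sqrt_le_sum_sqrt_div_sqrt (hc : 0 < c) (ha : ∀ p ∈ s, 0 < a p)
    (h : ∀ p ∈ s, c * a p ≤ b p) :
    ∑ p ∈ s, a p / √(b p) ≤ (∑ p ∈ s, √(a p)) / √c := by
  rw [sum_div]
  exact sum_le_sum fun p hp => div_sqrt_le_sqrt_div_sqrt_of_mul_le (ha p hp) hc (h p hp)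

lemma sum_sqrt_mul_sum_div_sqrt_le (ha : ∀ p ∈ s, 0 < a p)
    (hrel : ∀ p ∈ s, |b p - a p| ≤ ε * a p) (hε0 : 0 ≤ ε) (hε : ε ≤ 1 / 2) :
    (∑ p ∈ s, √(b p)) * ∑ p ∈ s, a p / √(b p) ≤ (1 + ε) ^ 2 * (∑ p ∈ s, √(a p)) ^ 2 := by
  set T := ∑ p ∈ s, √(a p)
  have hupper : ∀ p ∈ s, b p ≤ (1 + ε) * a p := fun p hp => by
    linarith [(abs_le.1 (hrel p hp)).2]
  have hlower : ∀ p ∈ s, (1 - ε) * a p ≤ b p := fun p hp => by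
    linarith [(abs_le.1 (hrel p hp)).1]
  calc (∑ p ∈ s, √(b p)) * ∑ p ∈ s, a p / √(b p)
      ≤ (√(1 + ε) * T) * (T / √(1 - ε)) :=
        mul_le_mul (sum_sqrt_le_sqrt_mul_sum_sqrt s (by linarith) hupper)
          (sum_div_sqrt_le_sum_sqrt_div_sqrt s (by linarith) ha hlower)
          (sum_nonneg fun p hp => div_nonneg (ha p hp).le (sqrt_nonneg _)) (by positivity)
    _ ≤ ((1 + ε) ^ 2 * √(1 - ε) * T) * (T / √(1 - ε)) := by
        gcongr
        exact sqrt_one_add_le_sq_mul_sqrt_one_sub hε0 hε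
    _ = (1 + ε) ^ 2 * T ^ 2 := by
        have : √(1 - ε) ≠ 0 := (sqrt_pos.2 (by linarith)).ne'
        field_simp

end Finset

lemma sum_sqrt_eq_sum_filter_pos {ι : Type*} [Fintype ι] {a b : ι → ℝ} (ha : ∀ p, 0 ≤ a p)
    (hsupp : ∀ p, a p = 0 → b p = 0) :
    ∑ p ∈ univ.filter (fun p => 0 < a p), √(b p) = ∑ p, √(b p) :=
  sum_filter_of_ne fun p _ hp =>
    (ha p).lt_of_ne' fun hap => hp (by rw [hsupp p hap, sqrt_zero])

lemma div_div_mul_eq_mul_div_div {K : Type*} [Field K] (x B Z w : K) :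
    x / ((B / Z) * w) = Z * (x / w) / B := by
  simp only [div_eq_mul_inv, mul_inv, inv_inv]
  ring

theorem plugin_regret_general {ι : Type*} [Fintype ι]
    (a : ι → ℝ) (ha : ∀ p, 0 ≤ a p)
    (Z : ℝ) (hZ : Z = ∑ p, Real.sqrt (a p))
    (ahat : ι → ℝ)
    (hsupp : ∀ p, a p = 0 → ahat p = 0)
    (ε : ℝ) (hε0 : 0 ≤ ε) (hε : ε ≤ 1 / 2)
    (hrel : ∀ p, 0 < a p → |ahat p - a p| ≤ ε * a p) :
    (∑ p, Real.sqrt (ahat p)) *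
        (∑ p ∈ Finset.univ.filter (fun p => 0 < a p), a p / Real.sqrt (ahat p)) ≤
      (1 + ε) ^ 2 * Z ^ 2 ∧
    ∀ B : ℝ, 0 < B →
      ∑ p ∈ Finset.univ.filter (fun p => 0 < a p),
          a p / ((B / ∑ q, Real.sqrt (ahat q)) * Real.sqrt (ahat p)) ≤
        (1 + ε) ^ 2 * Z ^ 2 / B := by
  have hmem : ∀ p ∈ univ.filter (fun p => 0 < a p), 0 < a p := fun p hp => (mem_filter.1 hp).2
  have hregret : (∑ p, √(ahat p)) * ∑ p ∈ univ.filter (fun p => 0 < a p), a p / √(ahat p) ≤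
      (1 + ε) ^ 2 * Z ^ 2 := by
    rw [hZ, ← sum_sqrt_eq_sum_filter_pos ha hsupp, ← sum_sqrt_eq_sum_filter_pos ha fun _ h => h]
    exact sum_sqrt_mul_sum_div_sqrt_le _ hmem (fun p hp => hrel p (hmem p hp)) hε0 hε
  refine ⟨hregret, fun B hB => ?_⟩
  simp only [div_div_mul_eq_mul_div_div, ← sum_div, ← mul_sum]
  exact div_le_div_of_nonneg_right hregret hB.le

/-- **Plug-in regret under relative perturbation (Theorem 3, Step 4).** If the
plug-in weights `â` share the support of the true weights `a` and have relative
error at most `ε ≤ 1/2` on that support, then the plug-in allocation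
proportional to `√(â_p)` achieves variance at most `(1+ε)² Z²/B`. -/
theorem plugin_regret {ι : Type*} [Fintype ι] [Nonempty ι]
    (a : ι → ℝ) (ha : ∀ p, 0 ≤ a p)
    (Z : ℝ) (hZ : Z = ∑ p, Real.sqrt (a p)) (hZpos : 0 < Z)
    (ahat : ι → ℝ)
    (hsupp : ∀ p, a p = 0 → ahat p = 0)
    (ε : ℝ) (hε0 : 0 ≤ ε) (hε : ε ≤ 1 / 2)
    (hrel : ∀ p, 0 < a p → |ahat p - a p| ≤ ε * a p) :
    (∑ p, Real.sqrt (ahat p)) *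
        (∑ p ∈ Finset.univ.filter (fun p => 0 < a p), a p / Real.sqrt (ahat p)) ≤
      (1 + ε) ^ 2 * Z ^ 2 ∧
    ∀ B : ℝ, 0 < B →
      ∑ p ∈ Finset.univ.filter (fun p => 0 < a p),
          a p / ((B / ∑ q, Real.sqrt (ahat q)) * Real.sqrt (ahat p)) ≤
        (1 + ε) ^ 2 * Z ^ 2 / B :=
  plugin_regret_general a ha Z hZ ahat hsupp ε hε0 hε hrel
end
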